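/- For fixed y ∈ [0,1] and any reference point c ∈ (0,1) with c < y, and any x ∈ [0,1], one has G₊(x,y) ≤ G₊(c,y) + g₊'(c,y)·(x − c), where g₊'(x,y) = −1 + 2y + (1−2x)√(y(1−y)/(x(1−x))). -/

import Mathlib

/-!
Write `s t = √(t(1-t))`. Then `gPlus x y = x + (1-2x)(1-y) + 2 s(x) s(y)` is affine in `x` plus a
nonnegative multiple of the concave function `s`, and `gPlus' c y` is its derivative in `x` at `c`;
so the tangent line at `c` dominates `gPlus (·) y` on `[0,1]`. Concretely, AM-GM applied to
`c(1-x)` and `x(1-c)` gives `2 s(c) s(x) ≤ c(1-x) + x(1-c)`, which is exactly the tangent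
inequality for `s`. The same AM-GM bound with `x = y` shows `gPlus c y ≤ 1 = gPlus y y`, so the tangent
at `c < y` has nonnegative slope, and it therefore also dominates the constant `1` for `x ≥ y`.
-/

noncomputable def gPlus (x y : ℝ) : ℝ := x + (1 - 2*x)*(1 - y) + 2*Real.sqrt (x*(1 - x)*y*(1 - y))
noncomputable def GPlus (x y : ℝ) : ℝ := if x ≥ y then 1 else gPlus x y
noncomputable def gPlus' (x y : ℝ) : ℝ := -1 + 2*y + (1 - 2*x)*Real.sqrt (y*(1 - y)/(x*(1 - x)))

open Real

lemma two_mul_sqrt_mul_sqrt_le {a b : ℝ} (ha : a ∈ Set.Icc (0:ℝ) 1) (hb : b ∈ Set.Icc (0:ℝ) 1) :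
    2 * √(a * (1 - a)) * √(b * (1 - b)) ≤ a * (1 - b) + b * (1 - a) := by
  have hab : 0 ≤ a * (1 - b) := mul_nonneg ha.1 (by linarith [hb.2])
  have hba : 0 ≤ b * (1 - a) := mul_nonneg hb.1 (by linarith [ha.2])
  have hprod : √(a * (1 - a)) * √(b * (1 - b)) = √(a * (1 - b)) * √(b * (1 - a)) := by
    rw [← sqrt_mul (mul_nonneg ha.1 (by linarith [ha.2])), ← sqrt_mul hab]
    ring_nf
  rw [mul_assoc, hprod]
  nlinarith [sq_nonneg (√(a * (1 - b)) - √(b * (1 - a))), sq_sqrt hab, sq_sqrt hba]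

lemma gPlus_eq {x : ℝ} (y : ℝ) (hx : x ∈ Set.Icc (0:ℝ) 1) :
    gPlus x y = x + (1 - 2*x)*(1 - y) + 2 * √(x * (1 - x)) * √(y * (1 - y)) := by
  rw [gPlus, mul_assoc 2, ← sqrt_mul (mul_nonneg hx.1 (by linarith [hx.2]))]
  ring_nf

lemma gPlus'_eq {c : ℝ} (y : ℝ) (hc : c ∈ Set.Icc (0:ℝ) 1) :
    gPlus' c y = -1 + 2*y + (1 - 2*c) * (√(y * (1 - y)) / √(c * (1 - c))) := by
  rw [gPlus', sqrt_div' _ (mul_nonneg hc.1 (by linarith [hc.2]))]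

lemma gPlus_self {y : ℝ} (hy : y ∈ Set.Icc (0:ℝ) 1) : gPlus y y = 1 := by
  rw [gPlus_eq y hy, mul_assoc, ← sq, sq_sqrt (mul_nonneg hy.1 (by linarith [hy.2]))]
  ring

lemma gPlus_le_one {x y : ℝ} (hx : x ∈ Set.Icc (0:ℝ) 1) (hy : y ∈ Set.Icc (0:ℝ) 1) :
    gPlus x y ≤ 1 := by
  rw [gPlus_eq y hx]
  linarith [two_mul_sqrt_mul_sqrt_le hx hy]

lemma gPlus_le_tangent {x y c : ℝ} (hx : x ∈ Set.Icc (0:ℝ) 1) (hc : c ∈ Set.Ioo (0:ℝ) 1) :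
    gPlus x y ≤ gPlus c y + gPlus' c y * (x - c) := by
  have hc' : c ∈ Set.Icc (0:ℝ) 1 := Set.Ioo_subset_Icc_self hc
  have hcc : 0 < c * (1 - c) := mul_pos hc.1 (by linarith [hc.2])
  set sc := √(c * (1 - c))
  set sx := √(x * (1 - x))
  set sy := √(y * (1 - y))
  have hsc : 0 < sc := sqrt_pos.mpr hcc
  have hsc2 : sc ^ 2 = c * (1 - c) := sq_sqrt hcc.le
  rw [gPlus_eq y hx, gPlus_eq y hc', gPlus'_eq y hc', ← sub_nonneg]
  have hdiff : c + (1 - 2*c)*(1 - y) + 2 * sc * sy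
      + (-1 + 2*y + (1 - 2*c) * (sy / sc)) * (x - c) - (x + (1 - 2*x)*(1 - y) + 2 * sx * sy)
      = sy / sc * (c * (1 - x) + x * (1 - c) - 2 * sc * sx) := by
    field_simp
    linear_combination 2 * sy * hsc2
  rw [hdiff]
  exact mul_nonneg (div_nonneg (sqrt_nonneg _) hsc.le)
    (sub_nonneg.mpr (two_mul_sqrt_mul_sqrt_le hc' hx))

lemma gPlus'_nonneg {y c : ℝ} (hy : y ∈ Set.Icc (0:ℝ) 1) (hc : c ∈ Set.Ioo (0:ℝ) 1)
    (hcy : c < y) : 0 ≤ gPlus' c y := by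
  have hrise : 1 - gPlus c y ≤ gPlus' c y * (y - c) := by
    linarith [gPlus_self hy ▸ gPlus_le_tangent (y := y) hy hc]
  have hle : gPlus c y ≤ 1 := gPlus_le_one (Set.Ioo_subset_Icc_self hc) hy
  nlinarith

/-- Linearized upper Cauchy–Schwarz constraint: tangent line at `c` dominates `G₊`. -/
theorem stmt3 (y c x : ℝ) (hy : y ∈ Set.Icc (0:ℝ) 1) (hc : c ∈ Set.Ioo (0:ℝ) 1)
    (hcy : c < y) (hx : x ∈ Set.Icc (0:ℝ) 1) :
    GPlus x y ≤ GPlus c y + gPlus' c y * (x - c) := by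
  have hGc : GPlus c y = gPlus c y := if_neg (not_le.mpr hcy)
  rw [hGc]
  rcases le_or_gt y x with hyx | hxy
  · have hGx : GPlus x y = 1 := if_pos hyx
    have htangent := gPlus_self hy ▸ gPlus_le_tangent (y := y) hy hc
    have hslope := mul_le_mul_of_nonneg_left (sub_le_sub_right hyx c) (gPlus'_nonneg hy hc hcy)
    linarith
  · have hGx : GPlus x y = gPlus x y := if_neg (not_le.mpr hxy)
    exact hGx ▸ gPlus_le_tangent hx hc
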